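/- There exists a constant c > 0 such that for every integer k ≥ 1 there are infinitely many integers N for which there exists a simple graph G on N vertices with vertices s and t, and two s–t shortest paths P and Q in G, such that P and Q are k-reconfigurable but every sequence of k-moves transforming P into Q has length at least 2^{cN/k}. -/

import Mathlib

/-- `kMove k l₁ l₂`: the two vertex sequences have the same length and agree
everywhere except possibly on a contiguous block of at most `k` internal positions
(positions `a, …, a + m - 1` with `m ≤ k`, `1 ≤ a`, and `a + m - 1 ≤ length - 2`). -/
def kMove {α : Type*} (k : ℕ) (l₁ l₂ : List α) : Prop :=
  l₁.length = l₂.length ∧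
    ∃ a m : ℕ, m ≤ k ∧ 1 ≤ a ∧ a + m + 1 ≤ l₁.length ∧
      ∀ j : ℕ, j < a ∨ a + m ≤ j → l₁[j]? = l₂[j]?

/-- One `k`-move between `s`–`t` shortest paths. -/
def KStep {V : Type*} (G : SimpleGraph V) (s t : V) (k : ℕ) (p q : G.Walk s t) : Prop :=
  p.length = G.dist s t ∧ q.length = G.dist s t ∧ kMove k p.support q.support

/-- Two `s`–`t` shortest paths are `k`-reconfigurable if they are joined by a
sequence of `s`–`t` shortest paths in which consecutive paths differ by a `k`-move. -/
def KReconfigurable {V : Type*} (G : SimpleGraph V) (s t : V) (k : ℕ)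
    (p q : G.Walk s t) : Prop :=
  Relation.ReflTransGen (KStep G s t k) p q

/-- The minimum number of `k`-moves needed to transform one `s`–`t` shortest path
into another. -/
noncomputable def kReconfDist {V : Type*} (G : SimpleGraph V) (s t : V) (k : ℕ)
    (P Q : G.Walk s t) : ℕ :=
  sInf {n : ℕ | ∃ f : ℕ → G.Walk s t, f 0 = P ∧ f n = Q ∧
    (∀ i ≤ n, (f i).length = G.dist s t) ∧
    ∀ i < n, kMove k (f i).support (f (i + 1)).support}

/-- The `k`-SPR reconfiguration graph of `(G, s, t)`: one vertex for each `s`–`t`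
shortest path, two paths being adjacent when they differ by a `k`-move. -/
def kSPRGraph {V : Type*} (G : SimpleGraph V) (s t : V) (k : ℕ) :
    SimpleGraph {p : G.Walk s t // p.length = G.dist s t} where
  Adj p q := p ≠ q ∧ kMove k p.1.support q.1.support
  symm := by
    constructor
    rintro p q ⟨hne, hlen, a, m, h1, h2, h3, h4⟩
    exact ⟨hne.symm, hlen.symm, a, m, h1, h2, hlen ▸ h3, fun j hj => (h4 j hj).symm⟩
  loopless := by constructor; intro p h; exact h.1 rfl

/-!
The graph is a `k`-fold blow-up of a path-shaped constraint satisfaction problem. Along a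
shortest `s`–`t` path, layer `i` spells a letter; the `k` layers of a block carry the same letter
and consecutive blocks obey the constraints. Since the layers `ℓ k` are `k` apart, a `k`-move
changes the letter of at most one block, so reconfiguring shortest paths by `k`-moves is
reconfiguring CSP solutions one variable at a time.

The CSP has `m` levels. Level `j` can put its first letter to some values only while level
`j - 1` sits at its start, to others only while it sits at its end, so one traversal of level `j`
forces two traversals of level `j - 1`. The rank, the position along this forced route, moves by
at most one per step and goes from `0` to `maxRank m ≥ 2 ^ m`, while the graph has `O(m k)`
vertices.
-/

theorem Nat.le_add_of_forall_succ_le_add_one {Φ : ℕ → ℕ} {n : ℕ}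
    (h : ∀ i < n, Φ (i + 1) ≤ Φ i + 1) : Φ n ≤ Φ 0 + n := by
  induction n with
  | zero => simp
  | succ n ih =>
    have := h n n.lt_succ_self
    have := ih fun i hi => h i (by omega)
    omega

theorem two_rpow_le_two_pow {c : ℝ} {m k N : ℕ} (hk : 0 < k) (h : c * N ≤ m * k) :
    (2 : ℝ) ^ (c * N / k) ≤ 2 ^ m := by
  rw [← Real.rpow_natCast]
  exact Real.rpow_le_rpow_of_exponent_le one_le_two ((div_le_iff₀ (by exact_mod_cast hk)).2 h)

namespace SimpleGraph.Walk

variable {V : Type*} {G : SimpleGraph V}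

def ofFn (f : ℕ → V) (n : ℕ) (h : ∀ i < n, G.Adj (f i) (f (i + 1))) : G.Walk (f 0) (f n) :=
  (ofSupport ((List.range (n + 1)).map f) (by simp)
    ((List.isChain_map f).2 ((List.isChain_range_succ _ n).2 h))).copy (by simp) (by simp)

theorem length_ofFn (f : ℕ → V) (n : ℕ) (h : ∀ i < n, G.Adj (f i) (f (i + 1))) :
    (ofFn f n h).length = n := by
  simp [ofFn]

theorem getVert_ofFn (f : ℕ → V) (n : ℕ) (h : ∀ i < n, G.Adj (f i) (f (i + 1))) {i : ℕ}
    (hi : i ≤ n) : (ofFn f n h).getVert i = f i := by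
  rw [getVert_eq_getD_support]
  simp [ofFn, Nat.lt_succ_of_le hi]

theorem support_getElem?_eq_of_getVert_eq {u v : V} {p q : G.Walk u v}
    (hlen : p.length = q.length) {j : ℕ} (h : p.getVert j = q.getVert j) :
    p.support[j]? = q.support[j]? := by
  by_cases hj : j ≤ p.length
  · rw [← getVert_eq_support_getElem? p hj, ← getVert_eq_support_getElem? q (hlen ▸ hj), h]
  · rw [List.getElem?_eq_none (by simp; omega), List.getElem?_eq_none (by simp; omega)]

theorem kMove_support_of_getVert_eq {u v : V} {p q : G.Walk u v} (hlen : p.length = q.length)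
    (hpos : 1 ≤ p.length) {a k : ℕ} (h : ∀ j, j < a ∨ a + k ≤ j → p.getVert j = q.getVert j) :
    kMove k p.support q.support := by
  have hagree : ∀ j, j = 0 ∨ p.length ≤ j ∨ j < a ∨ a + k ≤ j → p.getVert j = q.getVert j := by
    rintro j (rfl | hj | hj)
    · simp
    · rw [getVert_of_length_le p hj, getVert_of_length_le q (hlen ▸ hj)]
    · exact h j hj
  -- clip the window `[a, a + k)` to the internal positions `[1, p.length)`
  set b := min (max a 1) p.length
  refine ⟨by simp [hlen], b, min (a + k) p.length - b, by omega, by omega, by simp; omega,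
    fun j hj => support_getElem?_eq_of_getVert_eq hlen (hagree j (by omega))⟩

theorem exists_getVert_mul_eq_of_kMove {u v : V} {p q : G.Walk u v} {k : ℕ} (hk : 0 < k)
    (h : kMove k p.support q.support) :
    ∃ ℓ₀, ∀ ℓ, ℓ ≠ ℓ₀ → p.getVert (ℓ * k) = q.getVert (ℓ * k) := by
  obtain ⟨-, a, m, hm, -, -, hout⟩ := h
  -- the only multiple of `k` that can lie in the window `[a, a + m)`, as `m ≤ k`
  refine ⟨(a + k - 1) / k, fun ℓ hℓ => ?_⟩
  have hwindow : ℓ * k < a ∨ a + m ≤ ℓ * k := by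
    rcases Nat.lt_or_gt_of_ne hℓ with hlt | hgt
    · have := (Nat.le_div_iff_mul_le hk).1 hlt
      rw [Nat.succ_mul] at this
      omega
    · have := (Nat.div_lt_iff_lt_mul hk).1 hgt
      omega
  rw [getVert_eq_getD_support, getVert_eq_getD_support, List.getD_eq_getElem?_getD,
    List.getD_eq_getElem?_getD, hout _ hwindow]

theorem le_add_length_of_adj_le {f : V → ℕ} (hf : ∀ x y, G.Adj x y → f y ≤ f x + 1) :
    ∀ {u v : V} (p : G.Walk u v), f v ≤ f u + p.length
  | _, _, nil => by simp
  | _, _, cons h p => by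
    have := le_add_length_of_adj_le hf p
    have := hf _ _ h
    simp only [length_cons]
    omega

theorem apply_getVert_of_length_eq {f : V → ℕ} (hf : ∀ x y, G.Adj x y → f y ≤ f x + 1)
    {u v : V} {p : G.Walk u v} (hp : f u + p.length = f v) {i : ℕ} (hi : i ≤ p.length) :
    f (p.getVert i) = f u + i := by
  have h₁ := le_add_length_of_adj_le hf (p.take i)
  have h₂ := le_add_length_of_adj_le hf (p.drop i)
  simp only [take_length, drop_length] at h₁ h₂
  omega

end SimpleGraph.Walk

namespace PathCSP

def IsSol (C : ℕ → ℕ → ℕ → Prop) (L : ℕ) (w : ℕ → ℕ) : Prop :=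
  (∀ ℓ, 1 ≤ ℓ → ℓ ≤ L → w ℓ < 5) ∧ ∀ ℓ, 1 ≤ ℓ → ℓ < L → C ℓ (w ℓ) (w (ℓ + 1))

def Flip (C : ℕ → ℕ → ℕ → Prop) (L : ℕ) (v w : ℕ → ℕ) : Prop :=
  IsSol C L v ∧ IsSol C L w ∧ ∃ ℓ₀, ∀ ℓ, ℓ ≠ ℓ₀ → v ℓ = w ℓ

theorem Flip.symm {C : ℕ → ℕ → ℕ → Prop} {L : ℕ} {v w : ℕ → ℕ} (h : Flip C L v w) :
    Flip C L w v :=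
  let ⟨hv, hw, ℓ₀, hd⟩ := h
  ⟨hw, hv, ℓ₀, fun ℓ hℓ => (hd ℓ hℓ).symm⟩

end PathCSP

open PathCSP

namespace Blowup

variable (C : ℕ → ℕ → ℕ → Prop) (L k : ℕ)

/-- The layers `ℓ k, …, ℓ k + k - 1` hold `k` copies of the variable `ℓ` (only one, `L k`, for
`ℓ = L`): equal letters inside a block, the constraint `C ℓ` from block `ℓ` to block `ℓ + 1`.
The step from block `0` to block `1` and the step into `target` are unconstrained. -/
def Link (i a b : ℕ) : Prop :=
  i < L * k → if k ∣ i + 1 then i / k = 0 ∨ C (i / k) a b else b = a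

/-- Layer `i` consists of the vertices `5 i, …, 5 i + 4`; the vertex `5 i + a` carries the
letter `a`. -/
def graph : SimpleGraph (Fin (5 * (L * k + 2))) :=
  SimpleGraph.fromRel fun x y =>
    x.val / 5 + 1 = y.val / 5 ∧ Link C L k (x.val / 5) (x.val % 5) (y.val % 5)

def source : Fin (5 * (L * k + 2)) := ⟨0, by omega⟩

def target : Fin (5 * (L * k + 2)) := ⟨5 * (L * k + 1), by omega⟩

def letter (w : ℕ → ℕ) (i : ℕ) : ℕ := if k ≤ i ∧ i ≤ L * k then w (i / k) % 5 else 0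

theorem letter_lt_five (w : ℕ → ℕ) (i : ℕ) : letter L k w i < 5 := by
  unfold letter
  split_ifs <;> omega

def vertex (w : ℕ → ℕ) (i : ℕ) : Fin (5 * (L * k + 2)) :=
  ⟨5 * min i (L * k + 1) + letter L k w i, by have := letter_lt_five L k w i; omega⟩

variable {C L k}

theorem layer_le_succ_of_adj {x y : Fin (5 * (L * k + 2))} (h : (graph C L k).Adj x y) :
    y.val / 5 ≤ x.val / 5 + 1 := by
  rcases ((SimpleGraph.fromRel_adj _ _ _).1 h).2 with h | h <;> omega

theorem vertex_div (w : ℕ → ℕ) {i : ℕ} (hi : i ≤ L * k + 1) : (vertex L k w i).val / 5 = i := by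
  have := letter_lt_five L k w i
  simp only [vertex]
  omega

theorem vertex_mod (w : ℕ → ℕ) (i : ℕ) : (vertex L k w i).val % 5 = letter L k w i := by
  have := letter_lt_five L k w i
  simp only [vertex]
  omega

theorem letter_succ_of_not_dvd (w : ℕ → ℕ) {i : ℕ} (hi : i < L * k) (hdvd : ¬ k ∣ i + 1) :
    letter L k w (i + 1) = letter L k w i := by
  have hk : i + 1 ≠ k := fun h => hdvd (h ▸ dvd_refl k)
  have hdiv : (i + 1) / k = i / k := by simpa [hdvd] using @Nat.succ_div i k
  simp only [letter, hdiv]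
  split_ifs <;> omega

theorem link_letter (hk : 1 ≤ k) {w : ℕ → ℕ} (hw : IsSol C L w) (i : ℕ) :
    Link C L k i (letter L k w i) (letter L k w (i + 1)) := by
  intro hi
  split_ifs with hdvd
  · by_cases hik : i < k
    · exact Or.inl (Nat.div_eq_of_lt hik)
    have hdiv : (i + 1) / k = i / k + 1 := by simpa [hdvd] using @Nat.succ_div i k
    have hL : i / k + 1 ≤ L := hdiv ▸ Nat.div_le_of_le_mul (by rw [Nat.mul_comm]; omega)
    have hℓ : 1 ≤ i / k := (Nat.one_le_div_iff (by omega)).2 (by omega)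
    simp only [letter, if_pos (⟨by omega, by omega⟩ : k ≤ i ∧ i ≤ L * k),
      if_pos (⟨by omega, by omega⟩ : k ≤ i + 1 ∧ i + 1 ≤ L * k), hdiv,
      Nat.mod_eq_of_lt (hw.1 _ hℓ (by omega)), Nat.mod_eq_of_lt (hw.1 _ (by omega) hL)]
    exact Or.inr (hw.2 (i / k) hℓ (by omega))
  · exact letter_succ_of_not_dvd w hi hdvd

theorem vertex_adj (hk : 1 ≤ k) {w : ℕ → ℕ} (hw : IsSol C L w) {i : ℕ} (hi : i ≤ L * k) :
    (graph C L k).Adj (vertex L k w i) (vertex L k w (i + 1)) := by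
  have h₀ := vertex_div (L := L) (k := k) w (i := i) (by omega)
  have h₁ := vertex_div (L := L) (k := k) w (i := i + 1) (by omega)
  refine (SimpleGraph.fromRel_adj _ _ _).2 ⟨fun h => by rw [h] at h₀; omega, Or.inl ⟨by omega, ?_⟩⟩
  rw [h₀, vertex_mod, vertex_mod]
  exact link_letter hk hw i

theorem vertex_zero (hk : 1 ≤ k) (w : ℕ → ℕ) : vertex L k w 0 = source L k :=
  Fin.ext (by simp [vertex, source, letter, show ¬ k ≤ 0 by omega])

theorem vertex_of_le (w : ℕ → ℕ) {i : ℕ} (hi : L * k + 1 ≤ i) : vertex L k w i = target L k :=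
  Fin.ext (by simp [vertex, target, letter, min_eq_right hi, show ¬ i ≤ L * k by omega])

def walk (hk : 1 ≤ k) {w : ℕ → ℕ} (hw : IsSol C L w) :
    (graph C L k).Walk (source L k) (target L k) :=
  (SimpleGraph.Walk.ofFn (vertex L k w) (L * k + 1) fun _ hi => vertex_adj hk hw (by omega)).copy
    (vertex_zero hk w) (vertex_of_le w le_rfl)

theorem length_walk (hk : 1 ≤ k) {w : ℕ → ℕ} (hw : IsSol C L w) :
    (walk hk hw).length = L * k + 1 := by
  simp [walk, SimpleGraph.Walk.length_ofFn]

theorem getVert_walk (hk : 1 ≤ k) {w : ℕ → ℕ} (hw : IsSol C L w) (i : ℕ) :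
    (walk hk hw).getVert i = vertex L k w i := by
  by_cases hi : i ≤ L * k + 1
  · simp [walk, SimpleGraph.Walk.getVert_ofFn _ _ _ hi]
  · rw [SimpleGraph.Walk.getVert_of_length_le _ (by rw [length_walk]; omega),
      vertex_of_le w (by omega)]

theorem le_length (p : (graph C L k).Walk (source L k) (target L k)) :
    L * k + 1 ≤ p.length := by
  have := SimpleGraph.Walk.le_add_length_of_adj_le (fun _ _ => layer_le_succ_of_adj) p
  change 5 * (L * k + 1) / 5 ≤ 0 / 5 + p.length at this
  omega

theorem dist_eq (hk : 1 ≤ k) {w : ℕ → ℕ} (hw : IsSol C L w) :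
    (graph C L k).dist (source L k) (target L k) = L * k + 1 := by
  refine le_antisymm (length_walk hk hw ▸ SimpleGraph.dist_le _) ?_
  obtain ⟨p, hp⟩ := (walk hk hw).reachable.exists_walk_length_eq_dist
  exact hp ▸ le_length p

def readWord (p : (graph C L k).Walk (source L k) (target L k)) (ℓ : ℕ) : ℕ :=
  (p.getVert (ℓ * k)).val % 5

section ShortestPath

variable {p : (graph C L k).Walk (source L k) (target L k)} (hp : p.length = L * k + 1)
include hp

theorem layer_getVert {i : ℕ} (hi : i ≤ L * k + 1) : (p.getVert i).val / 5 = i := by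
  have := SimpleGraph.Walk.apply_getVert_of_length_eq (f := fun x => x.val / 5)
    (fun _ _ => layer_le_succ_of_adj) (p := p) (by rw [hp]; simp [source, target]) (hp ▸ hi)
  simpa [source] using this

theorem link_getVert {i : ℕ} (hi : i < L * k) :
    Link C L k i ((p.getVert i).val % 5) ((p.getVert (i + 1)).val % 5) := by
  have h₀ := layer_getVert hp (i := i) (by omega)
  have h₁ := layer_getVert hp (i := i + 1) (by omega)
  rcases ((SimpleGraph.fromRel_adj _ _ _).1 (p.adj_getVert_succ (i := i) (by omega))).2 with h | h
  · simpa only [h₀] using h.2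
  · omega

theorem getVert_mul_add_mod_five {ℓ r : ℕ} (hr : r < k) (hM : ℓ * k + r ≤ L * k) :
    (p.getVert (ℓ * k + r)).val % 5 = readWord p ℓ := by
  induction r with
  | zero => rfl
  | succ r ih =>
    have hlink := link_getVert hp (i := ℓ * k + r) (by omega)
    have hndvd : ¬ k ∣ ℓ * k + r + 1 := by
      rw [Nat.dvd_iff_mod_eq_zero, add_assoc, Nat.mul_add_mod_self_right, Nat.mod_eq_of_lt hr]
      omega
    rw [Link, if_neg hndvd] at hlink
    rw [← add_assoc, hlink (by omega), ih (by omega) (by omega)]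

theorem isSol_readWord (hk : 1 ≤ k) : IsSol C L (readWord p) := by
  refine ⟨fun ℓ _ _ => Nat.mod_lt _ (by omega), fun ℓ hℓ hL => ?_⟩
  have hM : (ℓ + 1) * k ≤ L * k := Nat.mul_le_mul_right k hL
  rw [Nat.succ_mul] at hM
  have hlink := link_getVert hp (i := ℓ * k + (k - 1)) (by omega)
  have hnext : ℓ * k + (k - 1) + 1 = (ℓ + 1) * k := by rw [Nat.succ_mul]; omega
  have hdiv : (ℓ * k + (k - 1)) / k = ℓ := by
    rw [Nat.mul_comm, Nat.mul_add_div (by omega), Nat.div_eq_of_lt (by omega), add_zero]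
  rw [Link, hnext, if_pos (Nat.dvd_mul_left k _), hdiv, getVert_mul_add_mod_five hp (by omega) (by omega)]
    at hlink
  exact (hlink (by omega)).resolve_left (by omega)

end ShortestPath

theorem readWord_walk (hk : 1 ≤ k) {w : ℕ → ℕ} (hw : IsSol C L w) {ℓ : ℕ} (hℓ : 1 ≤ ℓ)
    (hL : ℓ ≤ L) : readWord (walk hk hw) ℓ = w ℓ := by
  have hM : ℓ * k ≤ L * k := Nat.mul_le_mul_right k hL
  have hk' : k ≤ ℓ * k := Nat.le_mul_of_pos_left k hℓ
  rw [readWord, getVert_walk, vertex_mod, letter, if_pos ⟨hk', hM⟩, Nat.mul_div_cancel _ (by omega),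
    Nat.mod_eq_of_lt (hw.1 ℓ hℓ hL)]

theorem vertex_eq_of_div_ne {v w : ℕ → ℕ} {ℓ₀ : ℕ} (hd : ∀ ℓ, ℓ ≠ ℓ₀ → v ℓ = w ℓ) {j : ℕ}
    (hj : j / k ≠ ℓ₀) : vertex L k v j = vertex L k w j := by
  simp only [vertex, letter, hd _ hj]

theorem kStep_walk (hk : 1 ≤ k) {v w : ℕ → ℕ} (hv : IsSol C L v) (hw : IsSol C L w) {ℓ₀ : ℕ}
    (hd : ∀ ℓ, ℓ ≠ ℓ₀ → v ℓ = w ℓ) :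
    KStep (graph C L k) (source L k) (target L k) k (walk hk hv) (walk hk hw) := by
  refine ⟨by rw [length_walk, dist_eq hk hv], by rw [length_walk, dist_eq hk hv],
    SimpleGraph.Walk.kMove_support_of_getVert_eq (by rw [length_walk, length_walk])
      (by rw [length_walk]; omega) (a := ℓ₀ * k) fun j hj => ?_⟩
  rw [getVert_walk, getVert_walk]
  refine vertex_eq_of_div_ne hd fun hjk => ?_
  rcases hj with hj | hj
  · exact absurd hj (not_lt.2 (hjk ▸ Nat.div_mul_le_self j k))
  · have := Nat.lt_mul_div_succ j (show 0 < k by omega)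
    rw [hjk, Nat.mul_succ, Nat.mul_comm] at this
    omega

theorem kReconfigurable_walk (hk : 1 ≤ k) {v w : ℕ → ℕ}
    (h : Relation.ReflTransGen (Flip C L) v w) (hv : IsSol C L v) (hw : IsSol C L w) :
    KReconfigurable (graph C L k) (source L k) (target L k) k (walk hk hv) (walk hk hw) := by
  induction h with
  | refl => exact Relation.ReflTransGen.refl
  | tail _ hbw ih =>
    obtain ⟨hb, -, ℓ₀, hd⟩ := hbw
    exact (ih hb).tail (kStep_walk hk hb hw hd)

theorem flip_readWord_of_kMove (hk : 1 ≤ k) {p q : (graph C L k).Walk (source L k) (target L k)}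
    (hp : p.length = L * k + 1) (hq : q.length = L * k + 1) (h : kMove k p.support q.support) :
    Flip C L (readWord p) (readWord q) := by
  obtain ⟨ℓ₀, hd⟩ := SimpleGraph.Walk.exists_getVert_mul_eq_of_kMove (by omega) h
  exact ⟨isSol_readWord hp hk, isSol_readWord hq hk, ℓ₀, fun ℓ hℓ => by rw [readWord, readWord, hd ℓ hℓ]⟩

end Blowup

open Blowup

namespace Doubling

/- Variable `1` forms level `0`; variables `2 j` and `2 j + 1` form level `j`. A level runs through
the pairs of `pairCompat` in the listed order. Its first letter may be `2` or `4` only while the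
last letter of the level below is `2` (that level at its start), and `3` only while it is `3`
(that level at its end). -/

def linkCompat (a b : ℕ) : Prop :=
  b = 0 ∨ b = 1 ∨ ((b = 2 ∨ b = 4) ∧ a = 2) ∨ (b = 3 ∧ a = 3)

def pairCompat (a b : ℕ) : Prop :=
  (a, b) ∈ [(2, 2), (2, 0), (0, 0), (3, 0), (3, 1), (1, 1), (4, 1), (4, 3)]

def compat (ℓ a b : ℕ) : Prop :=
  if ℓ % 2 = 0 then pairCompat a b else linkCompat a b

abbrev Sol (m : ℕ) : (ℕ → ℕ) → Prop :=
  IsSol compat (2 * m - 1)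

theorem pairCompat_iff {a b : ℕ} : pairCompat a b ↔
    a = 2 ∧ b = 2 ∨ a = 2 ∧ b = 0 ∨ a = 0 ∧ b = 0 ∨ a = 3 ∧ b = 0 ∨ a = 3 ∧ b = 1 ∨
      a = 1 ∧ b = 1 ∨ a = 4 ∧ b = 1 ∨ a = 4 ∧ b = 3 := by
  simp [pairCompat]

theorem Sol.lower {q : ℕ} {w : ℕ → ℕ} (h : Sol (q + 2) w) : Sol (q + 1) w :=
  ⟨fun ℓ h₁ h₂ => h.1 ℓ h₁ (by omega), fun ℓ h₁ h₂ => h.2 ℓ h₁ (by omega)⟩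

theorem Sol.linkCompat {q : ℕ} {w : ℕ → ℕ} (h : Sol (q + 2) w) :
    linkCompat (w (2 * q + 1)) (w (2 * q + 2)) := by
  have := h.2 (2 * q + 1) (by omega) (by omega)
  rwa [compat, if_neg (by omega)] at this

theorem Sol.pairCompat {q : ℕ} {w : ℕ → ℕ} (h : Sol (q + 2) w) :
    pairCompat (w (2 * q + 2)) (w (2 * q + 3)) := by
  have := h.2 (2 * q + 2) (by omega) (by omega)
  rwa [compat, if_pos (by omega)] at this

def extend (q : ℕ) (w : ℕ → ℕ) (a b : ℕ) : ℕ → ℕ :=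
  Function.update (Function.update w (2 * q + 2) a) (2 * q + 3) b

theorem extend_of_lt {q : ℕ} (w : ℕ → ℕ) (a b : ℕ) {ℓ : ℕ} (hℓ : ℓ < 2 * q + 2) :
    extend q w a b ℓ = w ℓ := by
  simp [extend, show ℓ ≠ 2 * q + 2 by omega, show ℓ ≠ 2 * q + 3 by omega]

theorem sol_extend {q : ℕ} {w : ℕ → ℕ} {a b : ℕ} (hw : Sol (q + 1) w)
    (hl : linkCompat (w (2 * q + 1)) a) (hp : pairCompat a b) : Sol (q + 2) (extend q w a b) := by
  have hab := pairCompat_iff.1 hp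
  have h₁ : extend q w a b (2 * q + 2) = a := by simp [extend]
  have h₂ : extend q w a b (2 * q + 3) = b := by simp [extend]
  refine ⟨fun ℓ hℓ hL => ?_, fun ℓ hℓ hL => ?_⟩
  · rcases (by omega : ℓ < 2 * q + 2 ∨ ℓ = 2 * q + 2 ∨ ℓ = 2 * q + 3) with h | rfl | rfl
    · rw [extend_of_lt w a b h]; exact hw.1 ℓ hℓ (by omega)
    · rw [h₁]; omega
    · rw [h₂]; omega
  · rcases (by omega : ℓ < 2 * q + 1 ∨ ℓ = 2 * q + 1 ∨ ℓ = 2 * q + 2) with h | rfl | rfl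
    · rw [extend_of_lt w a b (by omega), extend_of_lt w a b (by omega)]
      exact hw.2 ℓ hℓ (by omega)
    · rwa [compat, if_neg (by omega), extend_of_lt w a b (by omega), h₁]
    · rwa [compat, if_pos (by omega), h₁, h₂]

/-- The position, between `0` and `2 N + 7`, of a level at the pair `(a, b)` whose lower levels
are at position `r` out of `N`: the lower levels move while the pair sits at `(0, 0)` (forward)
and at `(1, 1)` (backward). -/
def levelRank (N r a b : ℕ) : ℕ :=
  if a = 2 then (if b = 2 then 0 else 1)
  else if a = 0 then r + 2
  else if a = 3 then (if b = 0 then N + 3 else N + 4)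
  else if a = 1 then 2 * N + 5 - r
  else if b = 1 then 2 * N + 6 else 2 * N + 7

def maxRank : ℕ → ℕ
  | 0 => 0
  | 1 => 1
  | m + 2 => 2 * maxRank (m + 1) + 7

def rank : ℕ → (ℕ → ℕ) → ℕ
  | 0, _ => 0
  | 1, w => if w 1 = 3 then 1 else 0
  | q + 2, w => levelRank (maxRank (q + 1)) (rank (q + 1) w) (w (2 * q + 2)) (w (2 * q + 3))

theorem rank_le_maxRank : ∀ (m : ℕ) (w : ℕ → ℕ), rank m w ≤ maxRank m
  | 0, _ => le_rfl
  | 1, w => by simp only [rank, maxRank]; split_ifs <;> omega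
  | q + 2, w => by
    have := rank_le_maxRank (q + 1) w
    simp only [rank, maxRank, levelRank]
    split_ifs <;> omega

theorem rank_congr : ∀ (m : ℕ) {v w : ℕ → ℕ}, (∀ ℓ, 1 ≤ ℓ → ℓ ≤ 2 * m - 1 → v ℓ = w ℓ) →
    rank m v = rank m w
  | 0, _, _, _ => rfl
  | 1, _, _, h => by simp only [rank, h 1 le_rfl le_rfl]
  | q + 2, _, _, h => by
    simp only [rank, h (2 * q + 2) (by omega) (by omega), h (2 * q + 3) (by omega) (by omega),
      rank_congr (q + 1) fun ℓ h₁ h₂ => h ℓ h₁ (by omega)]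

theorem rank_eq_zero_of_last_eq_two {q : ℕ} {w : ℕ → ℕ} (hw : Sol (q + 1) w)
    (h : w (2 * q + 1) = 2) : rank (q + 1) w = 0 := by
  match q, hw, h with
  | 0, _, h => simp [rank, h]
  | p + 1, hw, h =>
    have hp := pairCompat_iff.1 hw.pairCompat
    rw [show 2 * (p + 1) + 1 = 2 * p + 3 by ring] at h
    simp only [rank, levelRank]
    split_ifs <;> omega

theorem rank_eq_maxRank_of_last_eq_three {q : ℕ} {w : ℕ → ℕ} (hw : Sol (q + 1) w)
    (h : w (2 * q + 1) = 3) : rank (q + 1) w = maxRank (q + 1) := by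
  match q, hw, h with
  | 0, _, h => simp [rank, maxRank, h]
  | p + 1, hw, h =>
    have hp := pairCompat_iff.1 hw.pairCompat
    rw [show 2 * (p + 1) + 1 = 2 * p + 3 by ring] at h
    simp only [rank, maxRank, levelRank]
    split_ifs <;> omega

theorem levelRank_le_succ_of_top_flip {N r a b a' b' c : ℕ} (hab : pairCompat a b)
    (hab' : pairCompat a' b') (hflip : a = a' ∨ b = b') (hc : linkCompat c a)
    (hc' : linkCompat c a') (h₂ : c = 2 → r = 0) (h₃ : c = 3 → r = N) :
    levelRank N r a' b' ≤ levelRank N r a b + 1 := by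
  rw [pairCompat_iff] at hab hab'
  unfold linkCompat at hc hc'
  rcases hab with ⟨rfl, rfl⟩ | ⟨rfl, rfl⟩ | ⟨rfl, rfl⟩ | ⟨rfl, rfl⟩ | ⟨rfl, rfl⟩ | ⟨rfl, rfl⟩ |
    ⟨rfl, rfl⟩ | ⟨rfl, rfl⟩ <;>
  rcases hab' with ⟨rfl, rfl⟩ | ⟨rfl, rfl⟩ | ⟨rfl, rfl⟩ | ⟨rfl, rfl⟩ | ⟨rfl, rfl⟩ | ⟨rfl, rfl⟩ |
    ⟨rfl, rfl⟩ | ⟨rfl, rfl⟩ <;>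
  simp [levelRank] <;> omega

theorem levelRank_le_succ_of_rank {N r r' a b : ℕ} (h : r' ≤ r + 1) (h' : r ≤ r' + 1)
    (hr : r ≤ N) : levelRank N r' a b ≤ levelRank N r a b + 1 := by
  simp only [levelRank]
  split_ifs <;> omega

theorem rank_le_rank_add_one : ∀ (m : ℕ) {v w : ℕ → ℕ}, Flip compat (2 * m - 1) v w →
    rank m w ≤ rank m v + 1
  | 0, _, _, _ => by simp [rank]
  | 1, _, w, _ => by have := rank_le_maxRank 1 w; simp only [maxRank] at this; omega
  | q + 2, v, w, ⟨hv, hw, ℓ₀, hd⟩ => by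
    by_cases htop : 2 * q + 2 ≤ ℓ₀
    · have hr : rank (q + 1) v = rank (q + 1) w := rank_congr (q + 1) fun ℓ _ hℓ => hd ℓ (by omega)
      have hc : v (2 * q + 1) = w (2 * q + 1) := hd _ (by omega)
      have hflip : v (2 * q + 2) = w (2 * q + 2) ∨ v (2 * q + 3) = w (2 * q + 3) := by
        by_cases h : ℓ₀ = 2 * q + 2
        · exact Or.inr (hd _ (by omega))
        · exact Or.inl (hd _ (Ne.symm h))
      simp only [rank]
      rw [← hr]
      exact levelRank_le_succ_of_top_flip (Sol.pairCompat hv) (Sol.pairCompat hw) hflip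
        (Sol.linkCompat hv) (hc ▸ Sol.linkCompat hw)
        (rank_eq_zero_of_last_eq_two (Sol.lower hv)) (rank_eq_maxRank_of_last_eq_three (Sol.lower hv))
    · have ih := rank_le_rank_add_one (q + 1) ⟨Sol.lower hv, Sol.lower hw, ℓ₀, hd⟩
      have ih' := rank_le_rank_add_one (q + 1)
        ⟨Sol.lower hw, Sol.lower hv, ℓ₀, fun ℓ hℓ => (hd ℓ hℓ).symm⟩
      simp only [rank]
      rw [← hd (2 * q + 2) (by omega), ← hd (2 * q + 3) (by omega)]
      exact levelRank_le_succ_of_rank ih ih' (rank_le_maxRank _ _)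

def startWord : ℕ → ℕ := fun _ => 2

def endWord : ℕ → ℕ → ℕ
  | 0 => startWord
  | 1 => Function.update startWord 1 3
  | q + 2 => extend q startWord 4 3

theorem sol_startWord (m : ℕ) : Sol m startWord :=
  ⟨fun _ _ _ => by simp [startWord], fun ℓ _ _ => by
    unfold compat; split_ifs <;> simp [startWord, pairCompat, linkCompat]⟩

theorem endWord_last (q : ℕ) : endWord (q + 1) (2 * q + 1) = 3 := by
  match q with
  | 0 => simp [endWord]
  | p + 1 => simp [endWord, extend, show 2 * (p + 1) + 1 = 2 * p + 3 by ring]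

theorem sol_endWord (q : ℕ) : Sol (q + 1) (endWord (q + 1)) := by
  match q with
  | 0 => exact ⟨fun ℓ h₁ h₂ => by simp [endWord, show ℓ = 1 by omega], fun ℓ h₁ h₂ => by omega⟩
  | p + 1 =>
    exact sol_extend (sol_startWord (p + 1)) (by simp [startWord, linkCompat])
      (by simp [pairCompat])

theorem rank_startWord (q : ℕ) : rank (q + 1) startWord = 0 :=
  rank_eq_zero_of_last_eq_two (sol_startWord _) rfl

theorem rank_endWord (q : ℕ) : rank (q + 1) (endWord (q + 1)) = maxRank (q + 1) :=
  rank_eq_maxRank_of_last_eq_three (sol_endWord q) (endWord_last q)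

theorem flip_extend {q : ℕ} {w : ℕ → ℕ} {a b a' b' : ℕ} (hw : Sol (q + 1) w)
    (h : linkCompat (w (2 * q + 1)) a ∧ linkCompat (w (2 * q + 1)) a' ∧ pairCompat a b ∧
      pairCompat a' b' ∧ (a = a' ∨ b = b')) :
    Flip compat (2 * (q + 2) - 1) (extend q w a b) (extend q w a' b') := by
  obtain ⟨hl, hl', hp, hp', hflip⟩ := h
  refine ⟨sol_extend hw hl hp, sol_extend hw hl' hp', ?_⟩
  rcases hflip with rfl | rfl
  · exact ⟨2 * q + 3, fun ℓ hℓ => by simp [extend, Function.update_apply, hℓ]⟩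
  · exact ⟨2 * q + 2, fun ℓ hℓ => by simp [extend, Function.update_apply, hℓ]⟩

theorem reflTransGen_extend {q : ℕ} {v w : ℕ → ℕ} {a b : ℕ}
    (h : Relation.ReflTransGen (Flip compat (2 * (q + 1) - 1)) v w) (ha : a = 0 ∨ a = 1)
    (hp : pairCompat a b) :
    Relation.ReflTransGen (Flip compat (2 * (q + 2) - 1)) (extend q v a b) (extend q w a b) := by
  have hl : ∀ c, linkCompat c a := fun c => by unfold linkCompat; omega
  refine Relation.ReflTransGen.lift (fun u => extend q u a b) (fun u u' ⟨hu, hu', ℓ₀, hd⟩ => ?_) _ _ h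
  refine ⟨sol_extend hu (hl _) hp, sol_extend hu' (hl _) hp, ℓ₀, fun ℓ hℓ => ?_⟩
  simp only [extend, Function.update_apply]
  split_ifs
  · rfl
  · rfl
  · exact hd ℓ hℓ

/-- Level `q + 1` runs through its eight pairs; while it sits at `(0, 0)` the lower levels run
forward, while it sits at `(1, 1)` they run backward. -/
theorem reflTransGen_startWord_endWord :
    ∀ q, Relation.ReflTransGen (Flip compat (2 * (q + 1) - 1)) startWord (endWord (q + 1))
  | 0 => .single ⟨sol_startWord 1, sol_endWord 0, 1, fun ℓ hℓ => by
      simp [endWord, hℓ]⟩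
  | q + 1 => by
    have hs := sol_startWord (q + 1)
    have he := sol_endWord q
    have hel := endWord_last q
    have hstart : extend q startWord 2 2 = startWord := by
      funext ℓ; simp [extend, Function.update_apply, startWord]
    have hback := Relation.ReflTransGen.mono (fun _ _ h => Flip.symm h) _ _
      (Relation.reflTransGen_swap.2 (reflTransGen_startWord_endWord q))
    rw [← hstart]
    refine (((((((((Relation.ReflTransGen.single (flip_extend hs (a' := 2) (b' := 0) ?_)).tail
      (flip_extend hs (a' := 0) (b' := 0) ?_)).trans
      (reflTransGen_extend (reflTransGen_startWord_endWord q) (Or.inl rfl) ?_)).tail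
      (flip_extend he (a' := 3) (b' := 0) ?_)).tail
      (flip_extend he (a' := 3) (b' := 1) ?_)).tail
      (flip_extend he (a' := 1) (b' := 1) ?_)).trans
      (reflTransGen_extend hback (Or.inr rfl) ?_)).tail
      (flip_extend hs (a' := 4) (b' := 1) ?_)).tail
      (flip_extend hs (a' := 4) (b' := 3) ?_))
    all_goals simp [startWord, hel, linkCompat, pairCompat]

theorem two_pow_le_maxRank : ∀ m, 2 ≤ m → 2 ^ m ≤ maxRank m
  | 2, _ => by simp [maxRank]
  | m + 3, _ => by
    have := two_pow_le_maxRank (m + 2) (by omega)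
    rw [show maxRank (m + 3) = 2 * maxRank (m + 2) + 7 from rfl, pow_succ]
    omega

theorem rank_readWord_walk {k : ℕ} (hk : 1 ≤ k) {m : ℕ} {w : ℕ → ℕ} (hw : Sol m w) :
    rank m (readWord (walk hk hw)) = rank m w :=
  rank_congr m fun _ h₁ h₂ => readWord_walk hk hw h₁ h₂

theorem maxRank_le_of_kMove_sequence {k : ℕ} (hk : 1 ≤ k) (q : ℕ) {n : ℕ}
    {f : ℕ → (graph compat (2 * (q + 1) - 1) k).Walk (source _ k) (target _ k)}
    (h₀ : f 0 = walk hk (sol_startWord (q + 1))) (hn : f n = walk hk (sol_endWord q))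
    (hlen : ∀ i ≤ n, (f i).length = (2 * (q + 1) - 1) * k + 1)
    (hmove : ∀ i < n, kMove k (f i).support (f (i + 1)).support) : maxRank (q + 1) ≤ n := by
  have := Nat.le_add_of_forall_succ_le_add_one (Φ := fun i => rank (q + 1) (readWord (f i)))
    fun i hi => rank_le_rank_add_one (q + 1)
      (flip_readWord_of_kMove hk (hlen i hi.le) (hlen (i + 1) hi) (hmove i hi))
  simpa only [h₀, hn, rank_readWord_walk, rank_startWord, rank_endWord, zero_add] using this

end Doubling

open Doubling

/-- There is a constant `c > 0` such that for every `k ≥ 1` there are arbitrarily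
large `N` and an `N`-vertex simple graph with two `k`-reconfigurable `s`–`t` shortest
paths `P`, `Q` such that every sequence of `k`-moves transforming `P` into `Q` has
length at least `2 ^ (c * N / k)`. -/
theorem exists_exponential_kReconf_distance :
    ∃ c : ℝ, 0 < c ∧ ∀ k : ℕ, 1 ≤ k → ∀ N₀ : ℕ, ∃ N : ℕ, N₀ ≤ N ∧
      ∃ (G : SimpleGraph (Fin N)) (s t : Fin N) (P Q : G.Walk s t),
        P.length = G.dist s t ∧ Q.length = G.dist s t ∧
        KReconfigurable G s t k P Q ∧
        ∀ (n : ℕ) (f : ℕ → G.Walk s t), f 0 = P → f n = Q →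
          (∀ i ≤ n, (f i).length = G.dist s t) →
          (∀ i < n, kMove k (f i).support (f (i + 1)).support) →
          (2 : ℝ) ^ (c * N / k) ≤ (n : ℝ) := by
  refine ⟨1 / 20, by norm_num, fun k hk N₀ => ?_⟩
  set q := N₀ + 1
  have hdist := dist_eq hk (sol_startWord (q + 1))
  have hN : 1 / 20 * ((5 * ((2 * (q + 1) - 1) * k + 2) : ℕ) : ℝ) ≤ ((q + 1 : ℕ) : ℝ) * k := by
    have hk' : (1 : ℝ) ≤ k := by exact_mod_cast hk
    rw [show 2 * (q + 1) - 1 = 2 * q + 1 by omega]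
    push_cast
    nlinarith
  refine ⟨_, ?_, _, _, _, walk hk (sol_startWord (q + 1)), walk hk (sol_endWord q),
    by rw [length_walk, hdist], by rw [length_walk, hdist],
    kReconfigurable_walk hk (reflTransGen_startWord_endWord q) _ _,
    fun n f h₀ hn hlen hmove => ?_⟩
  · have := Nat.le_mul_of_pos_right (2 * (q + 1) - 1) hk
    omega
  calc (2 : ℝ) ^ (1 / 20 * _ / k : ℝ) ≤ 2 ^ (q + 1) := two_rpow_le_two_pow (by omega) hN
    _ ≤ maxRank (q + 1) := by exact_mod_cast two_pow_le_maxRank (q + 1) (by omega)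
    _ ≤ n := by
      exact_mod_cast maxRank_le_of_kMove_sequence hk q h₀ hn (fun i hi => hdist ▸ hlen i hi) hmove
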